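/- Let X be a real Banach space and fix constants 0 < α < 1 and β > 0. Then there exists a constant C > 0, depending only on α and β, with the following property: for every λ > 0, if for every n ∈ ℕ and every bounded linear map u : ℓ²_n → X one has a_{[αn]}(u) ≤ λ·[αn]^{−β}·π₂(u*) whenever [αn] ≥ 1 (where [·] denotes the integer part and u* : X* → ℓ²_n is the adjoint), then sup_{k≥1} k^β·a_k(u) ≤ λ·C·π₂(u*) for every n ∈ ℕ and every bounded linear map u : ℓ²_n → X. -/

import Mathlib

/-!
If `a_b(u)` is almost attained by `S` with `rank S < b = ⌊αn⌋`, then `u` is almost unchanged on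
`ker S`, and compressing `u` to `(ker S)ᗮ` gives a map `v` on a Euclidean space of dimension
`< b ≤ αn` with `π₂(v*) ≤ π₂(u*)` and `a_k(u) ≤ ‖u - S‖ + a_k(v)`. Iterating, the dimensions decay
geometrically. A strong induction on `n` shows `a_k(u) ≤ λ π₂(u*) (C k^{-β} - E n^{-β})` with
`E = (1 - α^β)⁻¹` and `C = (2/α)^β + E`: since `1 + E α^β = E` and `n^{-β} ≤ α^β b^{-β}`, the
defect `E n^{-β}` pays for the error `b^{-β}` of one reduction step. In dimensions where the
hypothesis says nothing, `‖u‖ ≤ λ π₂(u*)` is obtained by testing it on rank-one maps.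
-/

open MeasureTheory ProbabilityTheory NormedSpace

noncomputable section

/-- The `k`-th approximation number of a continuous linear map:
`a_k(T) = inf {‖T - S‖ : rank S < k}`. -/
def apxNum {X Y : Type*} [SeminormedAddCommGroup X] [NormedSpace ℝ X]
    [SeminormedAddCommGroup Y] [NormedSpace ℝ Y] (k : ℕ) (T : X →L[ℝ] Y) : ℝ :=
  sInf {c : ℝ | ∃ S : X →L[ℝ] Y, LinearMap.rank (S : X →ₗ[ℝ] Y) < (k : Cardinal) ∧ c = ‖T - S‖}

/-- The standard Gaussian measure on `ℝⁿ`. -/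
def gaussN (n : ℕ) : Measure (Fin n → ℝ) := Measure.pi fun _ => gaussianReal 0 1

/-- The ℓ-norm of `u : ℓ²ₙ → X`:
`ℓ(u) = (∫ ‖∑ tₖ u(eₖ)‖² dγₙ(t))^{1/2}`. -/
def ellNorm {X : Type*} [SeminormedAddCommGroup X] [NormedSpace ℝ X] {n : ℕ}
    (u : EuclideanSpace ℝ (Fin n) →L[ℝ] X) : ℝ :=
  (∫ t, ‖∑ k, t k • u (EuclideanSpace.single k 1)‖ ^ 2 ∂(gaussN n)) ^ (1 / 2 : ℝ)

/-- The trace-dual norm of the ℓ-norm: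
`ℓ*(v) = sup {|tr(v ∘ u)| : ℓ(u) ≤ 1}`. -/
def ellStar {X : Type*} [SeminormedAddCommGroup X] [NormedSpace ℝ X] {n : ℕ}
    (v : X →L[ℝ] EuclideanSpace ℝ (Fin n)) : ℝ :=
  sSup {c : ℝ | ∃ u : EuclideanSpace ℝ (Fin n) →L[ℝ] X, ellNorm u ≤ 1 ∧
    c = |LinearMap.trace ℝ (EuclideanSpace ℝ (Fin n)) ((v.comp u) : _ →ₗ[ℝ] _)|}

/-- The weak-ℓ² norm of a finite family in `X`:
`sup {(∑ ξ(xᵢ)²)^{1/2} : ξ ∈ X*, ‖ξ‖ ≤ 1}`. -/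
def weakl2 {X : Type*} [SeminormedAddCommGroup X] [NormedSpace ℝ X] {m : ℕ} (x : Fin m → X) : ℝ :=
  sSup {c : ℝ | ∃ ξ : X →L[ℝ] ℝ, ‖ξ‖ ≤ 1 ∧ c = (∑ i, ξ (x i) ^ 2) ^ (1 / 2 : ℝ)}

/-- The 2-summing norm `π₂(T)` of a continuous linear map. -/
def pi2 {X Y : Type*} [SeminormedAddCommGroup X] [NormedSpace ℝ X]
    [SeminormedAddCommGroup Y] [NormedSpace ℝ Y] (T : X →L[ℝ] Y) : ℝ :=
  sInf {C : ℝ | 0 ≤ C ∧ ∀ (m : ℕ) (x : Fin m → X),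
    (∑ i, ‖T (x i)‖ ^ 2) ^ (1 / 2 : ℝ) ≤ C * weakl2 x}

/-- The Banach-space adjoint (dual map) `T* : Y* → X*`. -/
def dualCLM {X Y : Type*} [SeminormedAddCommGroup X] [NormedSpace ℝ X]
    [SeminormedAddCommGroup Y] [NormedSpace ℝ Y] (T : X →L[ℝ] Y) :
    StrongDual ℝ Y →L[ℝ] StrongDual ℝ X :=
  (ContinuousLinearMap.compL ℝ X Y ℝ).flip T

/-- The `k`-th Weyl number `x_k(T) = sup {a_k(T∘A) : A : ℓ₂ → X, ‖A‖ ≤ 1}`. -/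
def weylNum {X Y : Type*} [SeminormedAddCommGroup X] [NormedSpace ℝ X]
    [SeminormedAddCommGroup Y] [NormedSpace ℝ Y] (k : ℕ) (T : X →L[ℝ] Y) : ℝ :=
  sSup {c : ℝ | ∃ A : (lp (fun _ : ℕ => ℝ) 2) →L[ℝ] X, ‖A‖ ≤ 1 ∧ c = apxNum k (T.comp A)}

/-- The Banach–Mazur distance between two normed spaces. -/
def BMdist (X Y : Type*) [NormedAddCommGroup X] [NormedSpace ℝ X]
    [NormedAddCommGroup Y] [NormedSpace ℝ Y] : ℝ :=
  sInf {c : ℝ | ∃ w : X ≃L[ℝ] Y, c = ‖(w : X →L[ℝ] Y)‖ * ‖(w.symm : Y →L[ℝ] X)‖}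

/-- The Hilbert–Schmidt norm of a map between finite-dimensional Euclidean spaces. -/
def HSnorm {n m : ℕ} (A : EuclideanSpace ℝ (Fin n) →L[ℝ] EuclideanSpace ℝ (Fin m)) : ℝ :=
  (∑ k, ‖A (EuclideanSpace.single k 1)‖ ^ 2) ^ (1 / 2 : ℝ)

/-- `π₂*(u) = inf {‖A‖_HS ‖B‖ : u = B ∘ A}`, the trace dual of the 2-summing norm. -/
def pi2Star {X : Type*} [SeminormedAddCommGroup X] [NormedSpace ℝ X] {n : ℕ}
    (u : EuclideanSpace ℝ (Fin n) →L[ℝ] X) : ℝ :=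
  sInf {c : ℝ | ∃ (m : ℕ) (A : EuclideanSpace ℝ (Fin n) →L[ℝ] EuclideanSpace ℝ (Fin m))
    (B : EuclideanSpace ℝ (Fin m) →L[ℝ] X), u = B.comp A ∧ c = HSnorm A * ‖B‖}

/-- `γ₂(T)`: factorization norm through a Hilbert space `ℓ²(ι)`. -/
def gamma2 {X Y : Type*} [SeminormedAddCommGroup X] [NormedSpace ℝ X]
    [SeminormedAddCommGroup Y] [NormedSpace ℝ Y] (T : X →L[ℝ] Y) : ℝ :=
  sInf {c : ℝ | ∃ (ι : Type) (A : X →L[ℝ] lp (fun _ : ι => ℝ) 2)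
    (B : (lp (fun _ : ι => ℝ) 2) →L[ℝ] Y), T = B.comp A ∧ c = ‖B‖ * ‖A‖}

/-- `X` has weak cotype 2 with constant `C`. -/
def WeakCotype2With (X : Type*) [NormedAddCommGroup X] [NormedSpace ℝ X] (C : ℝ) : Prop :=
  ∀ (n : ℕ) (u : EuclideanSpace ℝ (Fin n) →L[ℝ] X) (k : ℕ), 1 ≤ k →
    Real.sqrt k * apxNum k u ≤ C * ellNorm u

/-- `X` has weak cotype 2. -/
def WeakCotype2 (X : Type*) [NormedAddCommGroup X] [NormedSpace ℝ X] : Prop :=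
  ∃ C : ℝ, 0 < C ∧ WeakCotype2With X C

/-- `X` has weak type 2 with constant `C`. -/
def WeakType2With (X : Type*) [NormedAddCommGroup X] [NormedSpace ℝ X] (C : ℝ) : Prop :=
  ∀ (n : ℕ) (v : X →L[ℝ] EuclideanSpace ℝ (Fin n)) (k : ℕ), 1 ≤ k →
    Real.sqrt k * apxNum k v ≤ C * ellStar v

/-- `X` has weak type 2. -/
def WeakType2 (X : Type*) [NormedAddCommGroup X] [NormedSpace ℝ X] : Prop :=
  ∃ C : ℝ, 0 < C ∧ WeakType2With X C

/-- The weak cotype 2 constant of `X`. -/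
def wC2 (X : Type*) [NormedAddCommGroup X] [NormedSpace ℝ X] : ℝ :=
  sInf {C : ℝ | 0 ≤ C ∧ WeakCotype2With X C}

/-- The weak type 2 constant of `X`. -/
def wT2 (X : Type*) [NormedAddCommGroup X] [NormedSpace ℝ X] : ℝ :=
  sInf {C : ℝ | 0 ≤ C ∧ WeakType2With X C}

/-- The `k`-th Gaussian coefficient of `f : ℝⁿ → X`: `∫ gₖ(s) f(s) dγₙ(s)`. -/
def gaussCoeff {X : Type*} [NormedAddCommGroup X] [NormedSpace ℝ X] {n : ℕ}
    (f : (Fin n → ℝ) → X) (k : Fin n) : X :=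
  ∫ s, s k • f s ∂(gaussN n)

/-- The Gaussian projection `Qₙ` is bounded by `C` on `L²(γₙ; X)` for every `n`. -/
def KConvexWith (X : Type*) [NormedAddCommGroup X] [NormedSpace ℝ X] (C : ℝ) : Prop :=
  ∀ (n : ℕ) (f : (Fin n → ℝ) → X), MemLp f 2 (gaussN n) →
    (∫ t, ‖∑ k, t k • gaussCoeff f k‖ ^ 2 ∂(gaussN n)) ^ (1 / 2 : ℝ) ≤
      C * (∫ t, ‖f t‖ ^ 2 ∂(gaussN n)) ^ (1 / 2 : ℝ)

/-- `X` is K-convex. -/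
def KConvex (X : Type*) [NormedAddCommGroup X] [NormedSpace ℝ X] : Prop :=
  ∃ C : ℝ, 0 < C ∧ KConvexWith X C

/-- The K-convexity constant of `X`. -/
def Kconst (X : Type*) [NormedAddCommGroup X] [NormedSpace ℝ X] : ℝ :=
  sInf {C : ℝ | 0 ≤ C ∧ KConvexWith X C}

section ApproximationNumbers

variable {E F X : Type*} [NormedAddCommGroup E] [NormedSpace ℝ E]
  [NormedAddCommGroup F] [NormedSpace ℝ F] [NormedAddCommGroup X] [NormedSpace ℝ X]

lemma apxNum_nonneg (k : ℕ) (T : E →L[ℝ] X) : 0 ≤ apxNum k T :=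
  Real.sInf_nonneg (by rintro c ⟨S, -, rfl⟩; exact norm_nonneg _)

lemma apxNum_le_norm_sub {k : ℕ} (T S : E →L[ℝ] X)
    (hS : LinearMap.rank (S : E →ₗ[ℝ] X) < k) : apxNum k T ≤ ‖T - S‖ :=
  csInf_le ⟨0, by rintro c ⟨S, -, rfl⟩; exact norm_nonneg _⟩ ⟨S, hS, rfl⟩

lemma le_apxNum {k : ℕ} (hk : 1 ≤ k) {T : E →L[ℝ] X} {c : ℝ}
    (h : ∀ S : E →L[ℝ] X, LinearMap.rank (S : E →ₗ[ℝ] X) < k → c ≤ ‖T - S‖) :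
    c ≤ apxNum k T := by
  refine le_csInf ⟨‖T - 0‖, 0, ?_, rfl⟩ (by rintro c ⟨S, hS, rfl⟩; exact h S hS)
  rw [ContinuousLinearMap.toLinearMap_zero, LinearMap.rank_zero]
  exact_mod_cast hk

lemma exists_norm_sub_lt_of_apxNum_lt {k : ℕ} (hk : 1 ≤ k) {T : E →L[ℝ] X} {c : ℝ}
    (h : apxNum k T < c) :
    ∃ S : E →L[ℝ] X, LinearMap.rank (S : E →ₗ[ℝ] X) < k ∧ ‖T - S‖ < c := by
  by_contra! hc
  exact (le_apxNum hk hc).not_gt h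

lemma apxNum_antitone {j k : ℕ} (hj : 1 ≤ j) (hjk : j ≤ k) (T : E →L[ℝ] X) :
    apxNum k T ≤ apxNum j T :=
  le_apxNum hj fun S hS => apxNum_le_norm_sub T S (hS.trans_le (by exact_mod_cast hjk))

lemma apxNum_one (T : E →L[ℝ] X) : apxNum 1 T = ‖T‖ := by
  refine le_antisymm (by simpa using apxNum_le_norm_sub T 0 (by simp)) (le_apxNum le_rfl ?_)
  intro S hS
  have hS0 : S = 0 := by
    have : LinearMap.range (S : E →ₗ[ℝ] X) = ⊥ :=
      Submodule.rank_eq_zero.mp (Cardinal.lt_one_iff.mp (by exact_mod_cast hS))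
    exact ContinuousLinearMap.coe_injective (LinearMap.range_eq_bot.mp this)
  simp [hS0]

lemma apxNum_eq_zero_of_finrank_lt [FiniteDimensional ℝ E] {k : ℕ}
    (hk : Module.finrank ℝ E < k) (T : E →L[ℝ] X) : apxNum k T = 0 := by
  refine le_antisymm ?_ (apxNum_nonneg k T)
  have hT : LinearMap.rank (T : E →ₗ[ℝ] X) < k := by
    rw [LinearMap.rank, ← Module.finrank_eq_rank]
    exact_mod_cast (LinearMap.finrank_range_le (T : E →ₗ[ℝ] X)).trans_lt hk
  simpa using apxNum_le_norm_sub T T hT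

lemma apxNum_add_le {k : ℕ} (hk : 1 ≤ k) (A B : E →L[ℝ] X) :
    apxNum k (A + B) ≤ ‖A‖ + apxNum k B := by
  rw [← sub_le_iff_le_add']
  refine le_apxNum hk fun S hS => ?_
  calc apxNum k (A + B) - ‖A‖ ≤ ‖A + (B - S)‖ - ‖A‖ := by
        gcongr; simpa [add_sub_assoc] using apxNum_le_norm_sub (A + B) S hS
    _ ≤ ‖B - S‖ := by linarith [norm_add_le A (B - S)]

lemma apxNum_comp_le {k : ℕ} (hk : 1 ≤ k) (T : E →L[ℝ] X) {A : F →L[ℝ] E} (hA : ‖A‖ ≤ 1) :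
    apxNum k (T ∘L A) ≤ apxNum k T := by
  refine le_apxNum hk fun S hS => ?_
  have hSA : LinearMap.rank ((S ∘L A : F →L[ℝ] X) : F →ₗ[ℝ] X) < k :=
    (LinearMap.rank_comp_le_left (A : F →ₗ[ℝ] E) (S : E →ₗ[ℝ] X)).trans_lt hS
  calc apxNum k (T ∘L A) ≤ ‖(T - S) ∘L A‖ := by
        simpa [ContinuousLinearMap.sub_comp] using apxNum_le_norm_sub _ _ hSA
    _ ≤ ‖T - S‖ * ‖A‖ := ContinuousLinearMap.opNorm_comp_le _ _
    _ ≤ ‖T - S‖ := mul_le_of_le_one_right (norm_nonneg _) hA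

end ApproximationNumbers

section TwoSumming

variable {X Y Z : Type*} [NormedAddCommGroup X] [NormedSpace ℝ X]
  [NormedAddCommGroup Y] [NormedSpace ℝ Y] [NormedAddCommGroup Z] [NormedSpace ℝ Z]

lemma sqrt_sum_sq_le_weakl2 {m : ℕ} (x : Fin m → X) {ξ : X →L[ℝ] ℝ} (hξ : ‖ξ‖ ≤ 1) :
    √(∑ i, ξ (x i) ^ 2) ≤ weakl2 x := by
  refine le_csSup ⟨(∑ i, ‖x i‖ ^ 2) ^ (1 / 2 : ℝ), ?_⟩ ⟨ξ, hξ, Real.sqrt_eq_rpow _⟩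
  rintro c ⟨η, hη, rfl⟩
  refine Real.rpow_le_rpow (by positivity) (Finset.sum_le_sum fun i _ => ?_) (by norm_num)
  refine sq_le_sq.mpr ?_
  rw [abs_norm, ← Real.norm_eq_abs]
  exact (η.le_opNorm (x i)).trans (mul_le_of_le_one_left (norm_nonneg _) hη)

lemma weakl2_nonneg {m : ℕ} (x : Fin m → X) : 0 ≤ weakl2 x :=
  (Real.sqrt_nonneg _).trans (sqrt_sum_sq_le_weakl2 x (ξ := 0) (by simp))

lemma sum_sq_le_sq_norm_mul_weakl2 {m : ℕ} (x : Fin m → X) (ξ : X →L[ℝ] ℝ) :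
    ∑ i, ξ (x i) ^ 2 ≤ (‖ξ‖ * weakl2 x) ^ 2 := by
  rcases eq_or_ne ξ 0 with rfl | hξ
  · simp
  have hξ' : 0 < ‖ξ‖ := norm_pos_iff.mpr hξ
  have hunit : ‖‖ξ‖⁻¹ • ξ‖ ≤ 1 := by rw [norm_smul, norm_inv, norm_norm, inv_mul_cancel₀ hξ'.ne']
  have hη := (Real.sqrt_le_left (weakl2_nonneg x)).mp (sqrt_sum_sq_le_weakl2 x hunit)
  calc ∑ i, ξ (x i) ^ 2 = ‖ξ‖ ^ 2 * ∑ i, (‖ξ‖⁻¹ • ξ) (x i) ^ 2 := by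
        simp only [smul_apply, smul_eq_mul, Finset.mul_sum]
        exact Finset.sum_congr rfl fun i _ => by field_simp
    _ ≤ ‖ξ‖ ^ 2 * weakl2 x ^ 2 := by gcongr
    _ = (‖ξ‖ * weakl2 x) ^ 2 := (mul_pow _ _ _).symm

def IsTwoSummingWith (T : X →L[ℝ] Y) (C : ℝ) : Prop :=
  0 ≤ C ∧ ∀ (m : ℕ) (x : Fin m → X), (∑ i, ‖T (x i)‖ ^ 2) ^ (1 / 2 : ℝ) ≤ C * weakl2 x

lemma pi2_le {T : X →L[ℝ] Y} {C : ℝ} (h : IsTwoSummingWith T C) : pi2 T ≤ C :=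
  csInf_le ⟨0, fun _ hC => hC.1⟩ h

lemma pi2_nonneg (T : X →L[ℝ] Y) : 0 ≤ pi2 T :=
  Real.sInf_nonneg fun _ hC => hC.1

lemma IsTwoSummingWith.comp {T : X →L[ℝ] Y} {C : ℝ} (h : IsTwoSummingWith T C) (B : Y →L[ℝ] Z) :
    IsTwoSummingWith (B ∘L T) (‖B‖ * C) := by
  refine ⟨mul_nonneg (norm_nonneg B) h.1, fun m x => ?_⟩
  rw [← Real.sqrt_eq_rpow]
  calc √(∑ i, ‖B (T (x i))‖ ^ 2) ≤ √(∑ i, (‖B‖ * ‖T (x i)‖) ^ 2) := by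
        gcongr with i; exact B.le_opNorm _
    _ = ‖B‖ * √(∑ i, ‖T (x i)‖ ^ 2) := by
        simp only [mul_pow, ← Finset.mul_sum, Real.sqrt_mul (sq_nonneg _),
          Real.sqrt_sq (norm_nonneg _)]
    _ ≤ ‖B‖ * (C * weakl2 x) := by gcongr; simpa only [Real.sqrt_eq_rpow] using h.2 m x
    _ = ‖B‖ * C * weakl2 x := (mul_assoc _ _ _).symm

lemma pi2_comp_le {T : X →L[ℝ] Y} {C : ℝ} (h : IsTwoSummingWith T C) (B : Y →L[ℝ] Z) :
    pi2 (B ∘L T) ≤ ‖B‖ * pi2 T := by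
  rw [pi2, pi2, ← smul_eq_mul, ← Real.sInf_smul_of_nonneg (norm_nonneg B)]
  refine le_csInf ⟨_, Set.smul_mem_smul_set h⟩ ?_
  rintro _ ⟨C', hC', rfl⟩
  exact pi2_le (IsTwoSummingWith.comp hC' B)

lemma dualCLM_comp (u : Y →L[ℝ] X) (A : Z →L[ℝ] Y) :
    dualCLM (u ∘L A) = dualCLM A ∘L dualCLM u := rfl

lemma norm_dualCLM_le (A : Y →L[ℝ] X) : ‖dualCLM A‖ ≤ ‖A‖ :=
  ContinuousLinearMap.opNorm_le_bound _ (norm_nonneg A) fun ξ =>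
    (ξ.opNorm_comp_le A).trans_eq (mul_comm _ _)

end TwoSumming

lemma EuclideanSpace.norm_sq_strongDual {n : ℕ} (φ : StrongDual ℝ (EuclideanSpace ℝ (Fin n))) :
    ‖φ‖ ^ 2 = ∑ j, φ (EuclideanSpace.single j 1) ^ 2 := by
  rw [← (InnerProductSpace.toDual ℝ _).symm.norm_map φ, EuclideanSpace.norm_sq_eq]
  refine Finset.sum_congr rfl fun j _ => ?_
  rw [Real.norm_eq_abs, sq_abs, ← InnerProductSpace.toDual_symm_apply, real_inner_comm,
    EuclideanSpace.inner_single_left]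
  simp

lemma isTwoSummingWith_dualCLM {X : Type*} [NormedAddCommGroup X] [NormedSpace ℝ X] {n : ℕ}
    (u : EuclideanSpace ℝ (Fin n) →L[ℝ] X) :
    IsTwoSummingWith (dualCLM u) √(∑ j, ‖u (EuclideanSpace.single j 1)‖ ^ 2) := by
  refine ⟨Real.sqrt_nonneg _, fun m ξ => ?_⟩
  rw [← Real.sqrt_eq_rpow, ← Real.sqrt_sq (weakl2_nonneg ξ), ← Real.sqrt_mul (by positivity)]
  gcongr
  calc ∑ i, ‖dualCLM u (ξ i)‖ ^ 2 = ∑ i, ∑ j, ξ i (u (EuclideanSpace.single j 1)) ^ 2 :=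
        Finset.sum_congr rfl fun i _ => EuclideanSpace.norm_sq_strongDual _
    _ = ∑ j, ∑ i, NormedSpace.inclusionInDoubleDual ℝ X (u (EuclideanSpace.single j 1)) (ξ i) ^ 2 :=
        Finset.sum_comm
    _ ≤ ∑ j, (‖u (EuclideanSpace.single j 1)‖ * weakl2 ξ) ^ 2 := by
        gcongr with j
        refine (sum_sq_le_sq_norm_mul_weakl2 ξ _).trans ?_
        have := weakl2_nonneg ξ
        gcongr
        exact NormedSpace.double_dual_bound ℝ X _
    _ = (∑ j, ‖u (EuclideanSpace.single j 1)‖ ^ 2) * weakl2 ξ ^ 2 := by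
        simp only [mul_pow, Finset.sum_mul]

lemma pi2_dualCLM_comp_le {X Y : Type*} [NormedAddCommGroup X] [NormedSpace ℝ X]
    [NormedAddCommGroup Y] [NormedSpace ℝ Y] {n : ℕ}
    (u : EuclideanSpace ℝ (Fin n) →L[ℝ] X) (A : Y →L[ℝ] EuclideanSpace ℝ (Fin n)) :
    pi2 (dualCLM (u ∘L A)) ≤ ‖A‖ * pi2 (dualCLM u) := by
  rw [dualCLM_comp]
  exact (pi2_comp_le (isTwoSummingWith_dualCLM u) _).trans
    (mul_le_mul_of_nonneg_right (norm_dualCLM_le A) (pi2_nonneg _))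

lemma Submodule.exists_comp_eq_starProjection {E : Type*} [NormedAddCommGroup E]
    [InnerProductSpace ℝ E] (V : Submodule ℝ E) [FiniteDimensional ℝ V] :
    ∃ (J : EuclideanSpace ℝ (Fin (Module.finrank ℝ V)) →L[ℝ] E)
      (W : E →L[ℝ] EuclideanSpace ℝ (Fin (Module.finrank ℝ V))),
      ‖J‖ ≤ 1 ∧ ‖W‖ ≤ 1 ∧ J ∘L W = V.starProjection := by
  let e := (stdOrthonormalBasis ℝ V).repr
  refine ⟨V.subtypeL ∘L e.symm.toContinuousLinearMap,
    e.toContinuousLinearMap ∘L V.orthogonalProjectionOnto, ?_, ?_, ?_⟩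
  · exact ContinuousLinearMap.opNorm_le_bound _ zero_le_one fun x => by
      rw [one_mul]
      exact (e.symm.norm_map x).le
  · exact ContinuousLinearMap.opNorm_le_bound _ zero_le_one fun x => by
      simpa using V.norm_orthogonalProjectionOnto_apply_le x
  · refine ContinuousLinearMap.ext fun x => ?_
    change ((e.symm (e (V.orthogonalProjectionOnto x)) : V) : E) = _
    rw [LinearIsometryEquiv.symm_apply_apply]
    rfl

lemma exists_apxNum_le_of_rank_lt {X : Type*} [NormedAddCommGroup X] [NormedSpace ℝ X] {n b : ℕ}
    (u S : EuclideanSpace ℝ (Fin n) →L[ℝ] X)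
    (hS : LinearMap.rank (S : EuclideanSpace ℝ (Fin n) →ₗ[ℝ] X) < b) :
    ∃ m < b, ∃ v : EuclideanSpace ℝ (Fin m) →L[ℝ] X, pi2 (dualCLM v) ≤ pi2 (dualCLM u) ∧
      ∀ k, 1 ≤ k → apxNum k u ≤ ‖u - S‖ + apxNum k v := by
  let K := LinearMap.ker (S : EuclideanSpace ℝ (Fin n) →ₗ[ℝ] X)
  obtain ⟨J, W, hJ, hW, hJW⟩ := Kᗮ.exists_comp_eq_starProjection
  have hm : Module.finrank ℝ Kᗮ < b := by
    have h1 : Module.finrank ℝ (LinearMap.range (S : EuclideanSpace ℝ (Fin n) →ₗ[ℝ] X)) +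
        Module.finrank ℝ K = n := by
      rw [LinearMap.finrank_range_add_finrank_ker, finrank_euclideanSpace_fin]
    have h2 : Module.finrank ℝ K + Module.finrank ℝ Kᗮ = n := by
      rw [K.finrank_add_finrank_orthogonal, finrank_euclideanSpace_fin]
    rw [LinearMap.rank, ← Module.finrank_eq_rank] at hS
    have h3 : Module.finrank ℝ (LinearMap.range (S : EuclideanSpace ℝ (Fin n) →ₗ[ℝ] X)) < b := by
      exact_mod_cast hS
    omega
  refine ⟨_, hm, u ∘L J, ?_, fun k hk => ?_⟩
  · simpa using (pi2_dualCLM_comp_le u J).trans (mul_le_of_le_one_left (pi2_nonneg _) hJ)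
  have hsplit : u = (u - S) ∘L K.starProjection + (u ∘L J) ∘L W := by
    ext t
    have hSK : S (K.starProjection t) = 0 := K.starProjection_apply_mem t
    have hJWt : J (W t) = t - K.starProjection t := by
      rw [← ContinuousLinearMap.comp_apply, hJW, K.starProjection_orthogonal']
      rfl
    simp [hJWt, hSK]
  calc apxNum k u ≤ ‖(u - S) ∘L K.starProjection‖ + apxNum k ((u ∘L J) ∘L W) := by
        conv_lhs => rw [hsplit]
        exact apxNum_add_le hk _ _
    _ ≤ ‖u - S‖ + apxNum k (u ∘L J) := by
        gcongr
        · exact (ContinuousLinearMap.opNorm_comp_le _ _).trans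
            (mul_le_of_le_one_right (norm_nonneg _) K.starProjection_norm_le)
        · exact apxNum_comp_le hk _ hW

lemma Nat.floor_mul_ceil_inv_eq_one {α : ℝ} (hα0 : 0 < α) (hα1 : α < 1) : ⌊α * ⌈α⁻¹⌉₊⌋₊ = 1 := by
  rw [Nat.floor_eq_iff (by positivity)]
  constructor
  · simpa [hα0.ne'] using mul_le_mul_of_nonneg_left (Nat.le_ceil α⁻¹) hα0.le
  · have := mul_lt_mul_of_pos_left (Nat.ceil_lt_add_one (inv_nonneg.mpr hα0.le)) hα0
    rw [mul_add, mul_inv_cancel₀ hα0.ne'] at this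
    norm_num
    linarith

def ApxNumFloorBound (X : Type*) [NormedAddCommGroup X] [NormedSpace ℝ X] (α β lam : ℝ) : Prop :=
  ∀ (n : ℕ) (u : EuclideanSpace ℝ (Fin n) →L[ℝ] X), 1 ≤ ⌊α * (n : ℝ)⌋₊ →
    apxNum ⌊α * (n : ℝ)⌋₊ u ≤ lam * (⌊α * (n : ℝ)⌋₊ : ℝ) ^ (-β) * pi2 (dualCLM u)

section ApxNumFloorBound

variable {X : Type*} [NormedAddCommGroup X] [NormedSpace ℝ X] {α β lam : ℝ}

/- Test the hypothesis on `u ∘ (s ↦ s₀ • t)`, defined on a space of dimension `⌈α⁻¹⌉`, where it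
bounds the first approximation number, i.e. the norm. -/
lemma ApxNumFloorBound.norm_le (H : ApxNumFloorBound X α β lam) (hα0 : 0 < α) (hα1 : α < 1)
    (hlam : 0 ≤ lam) {n : ℕ} (u : EuclideanSpace ℝ (Fin n) →L[ℝ] X) :
    ‖u‖ ≤ lam * pi2 (dualCLM u) := by
  set N := ⌈α⁻¹⌉₊
  have hN : ⌊α * N⌋₊ = 1 := Nat.floor_mul_ceil_inv_eq_one hα0 hα1
  let i₀ : Fin N := ⟨0, Nat.ceil_pos.mpr (inv_pos.mpr hα0)⟩
  refine u.opNorm_le_bound (mul_nonneg hlam (pi2_nonneg _)) fun t => ?_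
  let A : EuclideanSpace ℝ (Fin N) →L[ℝ] EuclideanSpace ℝ (Fin n) :=
    (PiLp.proj 2 (fun _ => ℝ) i₀).smulRight t
  have hA : ‖A‖ ≤ ‖t‖ := by
    rw [ContinuousLinearMap.norm_smulRight_apply]
    refine mul_le_of_le_one_left (norm_nonneg t) ?_
    exact ContinuousLinearMap.opNorm_le_bound _ zero_le_one fun x => by
      simpa using PiLp.norm_apply_le x i₀
  calc ‖u t‖ = ‖(u ∘L A) (EuclideanSpace.single i₀ 1)‖ := by simp [A]
    _ ≤ ‖u ∘L A‖ := by simpa using (u ∘L A).le_opNorm (EuclideanSpace.single i₀ 1)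
    _ = apxNum 1 (u ∘L A) := (apxNum_one _).symm
    _ ≤ lam * pi2 (dualCLM (u ∘L A)) := by
        simpa [hN] using H N (u ∘L A) hN.ge
    _ ≤ lam * (‖t‖ * pi2 (dualCLM u)) := by
        gcongr
        exact (pi2_dualCLM_comp_le u A).trans (by gcongr; exact pi2_nonneg _)
    _ = lam * pi2 (dualCLM u) * ‖t‖ := by ring

end ApxNumFloorBound

def decayProfile (α β k n : ℝ) : ℝ :=
  ((2 / α) ^ β + (1 - α ^ β)⁻¹) * k ^ (-β) - (1 - α ^ β)⁻¹ * n ^ (-β)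

section DecayProfile

variable {α β : ℝ}

lemma inv_one_sub_rpow_pos (hα0 : 0 < α) (hα1 : α < 1) (hβ : 0 < β) : 0 < (1 - α ^ β)⁻¹ :=
  inv_pos.mpr (sub_pos.mpr (Real.rpow_lt_one hα0.le hα1 hβ))

lemma rpow_neg_le_decayProfile (hα0 : 0 < α) (hα1 : α < 1) (hβ : 0 < β) {c k n : ℝ}
    (hk : 0 < k) (hkn : k ≤ n) (hkc : α * k ≤ 2 * c) :
    c ^ (-β) ≤ decayProfile α β k n := by
  have hE := inv_one_sub_rpow_pos hα0 hα1 hβ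
  have hn : n ^ (-β) ≤ k ^ (-β) := Real.rpow_le_rpow_of_nonpos hk hkn (by linarith)
  have hck : c ^ (-β) ≤ (2 / α) ^ β * k ^ (-β) := by
    calc c ^ (-β) ≤ (α / 2 * k) ^ (-β) :=
          Real.rpow_le_rpow_of_nonpos (by positivity) (by linarith) (by linarith)
      _ = (2 / α) ^ β * k ^ (-β) := by
          rw [Real.mul_rpow (by positivity) hk.le, Real.rpow_neg (by positivity),
            ← Real.inv_rpow (by positivity), inv_div]
  unfold decayProfile
  nlinarith [mul_le_mul_of_nonneg_left hn hE.le]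

lemma rpow_neg_add_decayProfile_le (hα0 : 0 < α) (hα1 : α < 1) (hβ : 0 < β) {k m b n : ℝ}
    (hm : 0 < m) (hmb : m ≤ b) (hbn : b ≤ α * n) :
    b ^ (-β) + decayProfile α β k m ≤ decayProfile α β k n := by
  set E := (1 - α ^ β)⁻¹
  have hE : 0 < E := inv_one_sub_rpow_pos hα0 hα1 hβ
  have hb : 0 < b := hm.trans_le hmb
  have hn : n ^ (-β) ≤ α ^ β * b ^ (-β) := by
    calc n ^ (-β) ≤ (α⁻¹ * b) ^ (-β) :=
          Real.rpow_le_rpow_of_nonpos (by positivity) (by rwa [inv_mul_le_iff₀ hα0]) (by linarith)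
      _ = α ^ β * b ^ (-β) := by
          rw [Real.mul_rpow (by positivity) hb.le, Real.inv_rpow hα0.le, Real.rpow_neg hα0.le,
            inv_inv]
  have hgeom : 1 + E * α ^ β = E := by
    have : 1 - α ^ β ≠ 0 := (inv_pos.mp hE).ne'
    calc 1 + E * α ^ β = E * (1 - α ^ β) + E * α ^ β := by rw [inv_mul_cancel₀ this]
      _ = E := by ring
  have key : b ^ (-β) + E * n ^ (-β) ≤ E * m ^ (-β) :=
    calc b ^ (-β) + E * n ^ (-β) ≤ b ^ (-β) + E * (α ^ β * b ^ (-β)) := by gcongr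
      _ = (1 + E * α ^ β) * b ^ (-β) := by ring
      _ = E * b ^ (-β) := by rw [hgeom]
      _ ≤ E * m ^ (-β) :=
          mul_le_mul_of_nonneg_left (Real.rpow_le_rpow_of_nonpos hm hmb (by linarith)) hE.le
  unfold decayProfile
  linarith

lemma decayProfile_nonneg (hα0 : 0 < α) (hα1 : α < 1) (hβ : 0 < β) {k n : ℝ} (hk : 0 < k)
    (hkn : k ≤ n) : 0 ≤ decayProfile α β k n :=
  (Real.rpow_nonneg hk.le _).trans
    (rpow_neg_le_decayProfile hα0 hα1 hβ hk hkn (by nlinarith))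

lemma rpow_mul_decayProfile_le (hα0 : 0 < α) (hα1 : α < 1) (hβ : 0 < β) {k n : ℝ} (hk : 0 < k)
    (hn : 0 ≤ n) : k ^ β * decayProfile α β k n ≤ (2 / α) ^ β + (1 - α ^ β)⁻¹ := by
  have hE := inv_one_sub_rpow_pos hα0 hα1 hβ
  have hkk : k ^ β * k ^ (-β) = 1 := by
    rw [Real.rpow_neg hk.le, mul_inv_cancel₀ (Real.rpow_pos_of_pos hk β).ne']
  have hpos : 0 ≤ k ^ β * ((1 - α ^ β)⁻¹ * n ^ (-β)) := by positivity
  unfold decayProfile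
  rw [mul_sub, ← mul_assoc, mul_comm (k ^ β), mul_assoc, hkk, mul_one]
  linarith

end DecayProfile

section Induction

variable {X : Type*} [NormedAddCommGroup X] [NormedSpace ℝ X] {α β lam : ℝ}

lemma ApxNumFloorBound.apxNum_le_of_floor_le (H : ApxNumFloorBound X α β lam) (hα0 : 0 < α)
    (hα1 : α < 1) (hβ : 0 < β) (hlam : 0 ≤ lam) {n : ℕ} (u : EuclideanSpace ℝ (Fin n) →L[ℝ] X)
    {k : ℕ} (hk : 1 ≤ k) (hkn : k ≤ n) (hbk : ⌊α * n⌋₊ ≤ k) :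
    apxNum k u ≤ lam * pi2 (dualCLM u) * decayProfile α β k n := by
  have hk0 : (0 : ℝ) < k := by exact_mod_cast hk
  have hkn' : (k : ℝ) ≤ n := by exact_mod_cast hkn
  have hP : 0 ≤ lam * pi2 (dualCLM u) := mul_nonneg hlam (pi2_nonneg _)
  have hαk : α * k ≤ α * n := by gcongr
  have hnb : α * n < ⌊α * n⌋₊ + 1 := Nat.lt_floor_add_one _
  rcases Nat.eq_zero_or_pos ⌊α * n⌋₊ with hb0 | hb1
  · rw [hb0, Nat.cast_zero, zero_add] at hnb
    calc apxNum k u ≤ apxNum 1 u := apxNum_antitone le_rfl hk u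
      _ ≤ lam * pi2 (dualCLM u) := (apxNum_one u).trans_le (H.norm_le hα0 hα1 hlam u)
      _ = lam * pi2 (dualCLM u) * (1 : ℝ) ^ (-β) := by simp
      _ ≤ lam * pi2 (dualCLM u) * decayProfile α β k n := by
          gcongr
          exact rpow_neg_le_decayProfile hα0 hα1 hβ hk0 hkn' (by linarith)
  · have hb1' : (1 : ℝ) ≤ ⌊α * n⌋₊ := by exact_mod_cast hb1
    calc apxNum k u ≤ apxNum ⌊α * n⌋₊ u := apxNum_antitone hb1 hbk u
      _ ≤ lam * pi2 (dualCLM u) * (⌊α * n⌋₊ : ℝ) ^ (-β) := (H n u hb1).trans_eq (by ring)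
      _ ≤ lam * pi2 (dualCLM u) * decayProfile α β k n := by
          gcongr
          exact rpow_neg_le_decayProfile hα0 hα1 hβ hk0 hkn' (by linarith)

lemma ApxNumFloorBound.apxNum_le_of_lt_floor (H : ApxNumFloorBound X α β lam) (hα0 : 0 < α)
    (hα1 : α < 1) (hβ : 0 < β) (hlam : 0 ≤ lam) {n : ℕ}
    (IH : ∀ m < n, ∀ (v : EuclideanSpace ℝ (Fin m) →L[ℝ] X) (k : ℕ), 1 ≤ k → k ≤ m →
      apxNum k v ≤ lam * pi2 (dualCLM v) * decayProfile α β k m)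
    (u : EuclideanSpace ℝ (Fin n) →L[ℝ] X) {k : ℕ} (hk : 1 ≤ k) (hkn : k ≤ n)
    (hkb : k < ⌊α * n⌋₊) :
    apxNum k u ≤ lam * pi2 (dualCLM u) * decayProfile α β k n := by
  set b := ⌊α * n⌋₊
  have hk0 : (0 : ℝ) < k := by exact_mod_cast hk
  have hkn' : (k : ℝ) ≤ n := by exact_mod_cast hkn
  have hkb' : (k : ℝ) < b := by exact_mod_cast hkb
  have hbn : (b : ℝ) ≤ α * n := Nat.floor_le (by positivity)
  have hP : 0 ≤ lam * pi2 (dualCLM u) := mul_nonneg hlam (pi2_nonneg _)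
  have hb1 : 1 ≤ b := hk.trans hkb.le
  refine le_of_forall_pos_lt_add fun ε hε => ?_
  obtain ⟨S, hS, hSu⟩ := exists_norm_sub_lt_of_apxNum_lt hb1
    ((H n u hb1).trans_lt (lt_add_of_pos_right _ hε))
  rw [mul_right_comm] at hSu
  obtain ⟨m, hmb, v, hv, hred⟩ := exists_apxNum_le_of_rank_lt u S hS
  rcases Nat.lt_or_ge m k with hmk | hkm
  · have hv0 : apxNum k v = 0 := apxNum_eq_zero_of_finrank_lt (by simpa using hmk) v
    calc apxNum k u ≤ ‖u - S‖ := by simpa [hv0] using hred k hk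
      _ < lam * pi2 (dualCLM u) * (b : ℝ) ^ (-β) + ε := hSu
      _ ≤ lam * pi2 (dualCLM u) * decayProfile α β k n + ε := by
          gcongr
          exact rpow_neg_le_decayProfile hα0 hα1 hβ hk0 hkn' (by nlinarith)
  have hmb' : (m : ℝ) < b := by exact_mod_cast hmb
  have hmn : m < n := by exact_mod_cast (show (m : ℝ) < n by nlinarith)
  have hkm' : (k : ℝ) ≤ m := by exact_mod_cast hkm
  have hvu : lam * pi2 (dualCLM v) * decayProfile α β k m ≤
      lam * pi2 (dualCLM u) * decayProfile α β k m := by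
    gcongr
    exact decayProfile_nonneg hα0 hα1 hβ hk0 hkm'
  calc apxNum k u ≤ ‖u - S‖ + apxNum k v := hred k hk
    _ < lam * pi2 (dualCLM u) * (b : ℝ) ^ (-β) + ε +
          lam * pi2 (dualCLM u) * decayProfile α β k m :=
        add_lt_add_of_lt_of_le hSu ((IH m hmn v k hk hkm).trans hvu)
    _ = lam * pi2 (dualCLM u) * ((b : ℝ) ^ (-β) + decayProfile α β k m) + ε := by ring
    _ ≤ lam * pi2 (dualCLM u) * decayProfile α β k n + ε := by
        gcongr
        exact rpow_neg_add_decayProfile_le hα0 hα1 hβ (hk0.trans_le hkm') hmb'.le hbn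

theorem ApxNumFloorBound.apxNum_le_decayProfile (H : ApxNumFloorBound X α β lam) (hα0 : 0 < α)
    (hα1 : α < 1) (hβ : 0 < β) (hlam : 0 ≤ lam) (n : ℕ) (u : EuclideanSpace ℝ (Fin n) →L[ℝ] X)
    (k : ℕ) (hk : 1 ≤ k) (hkn : k ≤ n) :
    apxNum k u ≤ lam * pi2 (dualCLM u) * decayProfile α β k n := by
  induction n using Nat.strong_induction_on generalizing k with
  | _ n IH =>
  rcases Nat.lt_or_ge k ⌊α * n⌋₊ with hkb | hbk
  · exact H.apxNum_le_of_lt_floor hα0 hα1 hβ hlam IH u hk hkn hkb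
  · exact H.apxNum_le_of_floor_le hα0 hα1 hβ hlam u hk hkn hbk

end Induction

theorem stmt_1 (α β : ℝ) (hα0 : 0 < α) (hα1 : α < 1) (hβ : 0 < β) :
    ∃ C : ℝ, 0 < C ∧
      ∀ (X : Type) [NormedAddCommGroup X] [NormedSpace ℝ X] [CompleteSpace X] (lam : ℝ),
        0 < lam →
        (∀ (n : ℕ) (u : EuclideanSpace ℝ (Fin n) →L[ℝ] X), 1 ≤ ⌊α * (n : ℝ)⌋₊ →
          apxNum ⌊α * (n : ℝ)⌋₊ u ≤ lam * (⌊α * (n : ℝ)⌋₊ : ℝ) ^ (-β) * pi2 (dualCLM u)) →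
        ∀ (n : ℕ) (u : EuclideanSpace ℝ (Fin n) →L[ℝ] X) (k : ℕ), 1 ≤ k →
          (k : ℝ) ^ β * apxNum k u ≤ lam * C * pi2 (dualCLM u) := by
  have hC : 0 < (2 / α) ^ β + (1 - α ^ β)⁻¹ :=
    add_pos_of_nonneg_of_pos (by positivity) (inv_one_sub_rpow_pos hα0 hα1 hβ)
  refine ⟨_, hC, ?_⟩
  intro X _ _ _ lam hlam H n u k hk
  have hP : 0 ≤ lam * pi2 (dualCLM u) := mul_nonneg hlam.le (pi2_nonneg _)
  rcases le_or_gt k n with hkn | hnk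
  · have hk0 : (0 : ℝ) < k := by exact_mod_cast hk
    calc (k : ℝ) ^ β * apxNum k u
        ≤ (k : ℝ) ^ β * (lam * pi2 (dualCLM u) * decayProfile α β k n) := by
          gcongr
          exact ApxNumFloorBound.apxNum_le_decayProfile H hα0 hα1 hβ hlam.le n u k hk hkn
      _ = lam * pi2 (dualCLM u) * ((k : ℝ) ^ β * decayProfile α β k n) := by ring
      _ ≤ lam * pi2 (dualCLM u) * ((2 / α) ^ β + (1 - α ^ β)⁻¹) := by
          gcongr
          exact rpow_mul_decayProfile_le hα0 hα1 hβ hk0 n.cast_nonneg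
      _ = lam * ((2 / α) ^ β + (1 - α ^ β)⁻¹) * pi2 (dualCLM u) := by ring
  · rw [apxNum_eq_zero_of_finrank_lt (by simpa using hnk) u, mul_zero]
    exact mul_nonneg (mul_nonneg hlam.le hC.le) (pi2_nonneg _)
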